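/- Multilevel Monte Carlo complexity theorem: suppose there exist independent unbiased level estimators Ŷ_l with E[Ŷ_0] = E[P̂_0], E[Ŷ_l] = E[P̂_l − P̂_{l−1}] for l > 0, weak error bound |E[P̂_l − P]| ≤ c_1 h_l^α with α ≥ 1/2, variance bound V[Ŷ_l] ≤ c_2 h_l^β / N_l, and cost bound C_l ≤ c_3 N_l / h_l, where h_l = 2^{−l} T. Then there exists c_4 such that for every ε < e^{−1} one can choose L and N_0,...,N_L so that the combined estimator Ŷ = Σ_l Ŷ_l has mean-square error E[(Ŷ − E[P])²] < ε², with total cost C ≤ c_4 ε^{−2} if β > 1, C ≤ c_4 ε^{−2}(log ε)² if β = 1, and C ≤ c_4 ε^{−2−(1−β)/α} if 0 < β < 1. -/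

import Mathlib

open MeasureTheory Finset ProbabilityTheory

/-!
Take the finest level `L` with `2 ^ L ≍ ε ^ (-1/α)`, just large enough for the bias bound
`c₁ h_L ^ α ≤ ε / 2`, and allocate `N_l ∝ √(V_l / C_l) = h_l ^ ((β + 1) / 2)` samples, scaled so
that the total variance is at most `ε² / 4`. By independence the mean-square error is the total
variance plus the squared bias, hence below `ε²`. The total cost is then at most a constant times
`ε⁻² (∑_{l ≤ L} h_l ^ ((β - 1) / 2)) ^ 2 + 2 ^ L`; the geometric sum is bounded, `≍ L ≍ |log ε|`,
or `≍ 2 ^ (L (1 - β) / 2)` according as `β > 1`, `β = 1` or `β < 1`, and `α ≥ 1/2` makes the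
rounding cost `2 ^ L ≲ ε⁻²` negligible.
-/

section BiasVariance

variable {Ω : Type*} [MeasurableSpace Ω] {μ : Measure Ω} [IsProbabilityMeasure μ]

theorem integral_sub_sq_eq_variance_add_sq {X : Ω → ℝ} (hX : MemLp X 2 μ) (m : ℝ) :
    ∫ ω, (X ω - m) ^ 2 ∂μ = variance X μ + (∫ ω, X ω ∂μ - m) ^ 2 := by
  have hXi : Integrable X μ := hX.integrable one_le_two
  have hsq : Integrable (fun ω => X ω ^ 2 - 2 * m * X ω) μ :=
    hX.integrable_sq.sub (hXi.const_mul _)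
  have hexpand : ∀ ω, (X ω - m) ^ 2 = X ω ^ 2 - 2 * m * X ω + m ^ 2 := fun ω => by ring
  simp_rw [hexpand]
  rw [variance_eq_sub hX, integral_add hsq (integrable_const _),
    integral_sub hX.integrable_sq (hXi.const_mul _), integral_const_mul, integral_const,
    probReal_univ, smul_eq_mul, one_mul]
  simp only [Pi.pow_apply]
  ring

theorem integral_sum_sub_sq_eq_of_iIndepFun {ι : Type*} {X : ι → Ω → ℝ}
    (hX : ∀ i, MemLp (X i) 2 μ) (hindep : iIndepFun X μ) (s : Finset ι) (m : ℝ) :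
    ∫ ω, (∑ i ∈ s, X i ω - m) ^ 2 ∂μ =
      ∑ i ∈ s, variance (X i) μ + (∑ i ∈ s, ∫ ω, X i ω ∂μ - m) ^ 2 := by
  have hdecomp := integral_sub_sq_eq_variance_add_sq (memLp_finsetSum' s fun i _ => hX i) m
  simp only [Finset.sum_apply] at hdecomp
  rw [hdecomp, integral_finsetSum s fun i _ => (hX i).integrable one_le_two,
    ← IndepFun.variance_sum (fun i _ => hX i) fun i _ j _ hij => hindep.indepFun hij]

end BiasVariance

theorem sum_range_succ_eq_of_telescoping {M : Type*} [AddCommGroup M] {a b : ℕ → M}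
    (h0 : a 0 = b 0) (h : ∀ l, 1 ≤ l → a l = b l - b (l - 1)) (n : ℕ) :
    ∑ l ∈ range (n + 1), a l = b n := by
  induction n with
  | zero => simpa using h0
  | succ n ih => rw [sum_range_succ, ih, h (n + 1) (by omega), Nat.add_sub_cancel, add_sub_cancel]

section SampleAllocation

variable {s w : ℕ → ℝ} {n : ℕ} {δ : ℝ}

/-- With per-sample cost `w l` and per-sample variance `s l ^ 2 / w l`, this is the
Lagrange-multiplier allocation `N_l ∝ √(V_l / C_l)`, scaled so that the total variance is at most
`δ` while the total cost is `(∑ s) ^ 2 / δ` up to rounding. -/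
noncomputable def mlmcSampleSize (s w : ℕ → ℝ) (n : ℕ) (δ : ℝ) (l : ℕ) : ℕ :=
  ⌈(∑ k ∈ range n, s k) * s l / (δ * w l)⌉₊

theorem one_le_mlmcSampleSize (hs : ∀ l, 0 < s l) (hw : ∀ l, 0 < w l) (hn : 0 < n)
    (hδ : 0 < δ) (l : ℕ) : 1 ≤ mlmcSampleSize s w n δ l := by
  have hS : 0 < ∑ k ∈ range n, s k := sum_pos (fun k _ => hs k) (nonempty_range_iff.2 hn.ne')
  have := hs l; have := hw l
  exact Nat.ceil_pos.2 (by positivity)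

theorem sum_sq_div_mul_mlmcSampleSize_le (hs : ∀ l, 0 < s l) (hw : ∀ l, 0 < w l)
    (hδ : 0 < δ) :
    ∑ l ∈ range n, s l ^ 2 / (w l * mlmcSampleSize s w n δ l) ≤ δ := by
  rcases n.eq_zero_or_pos with rfl | hn
  · simpa using hδ.le
  set S := ∑ k ∈ range n, s k
  have hS : 0 < S := sum_pos (fun k _ => hs k) (nonempty_range_iff.2 hn.ne')
  calc ∑ l ∈ range n, s l ^ 2 / (w l * mlmcSampleSize s w n δ l)
      ≤ ∑ l ∈ range n, δ / S * s l := sum_le_sum fun l _ => by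
        have := hs l; have := hw l
        calc s l ^ 2 / (w l * mlmcSampleSize s w n δ l)
            ≤ s l ^ 2 / (w l * (S * s l / (δ * w l))) := by
              gcongr
              exact Nat.le_ceil _
          _ = δ / S * s l := by field_simp
    _ = δ := by rw [← mul_sum, div_mul_cancel₀ _ hS.ne']

theorem sum_mul_mlmcSampleSize_le (hs : ∀ l, 0 ≤ s l) (hw : ∀ l, 0 < w l) (hδ : 0 < δ) :
    ∑ l ∈ range n, w l * mlmcSampleSize s w n δ l ≤
      (∑ k ∈ range n, s k) ^ 2 / δ + ∑ l ∈ range n, w l := by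
  set S := ∑ k ∈ range n, s k
  have hS : 0 ≤ S := sum_nonneg fun k _ => hs k
  calc ∑ l ∈ range n, w l * mlmcSampleSize s w n δ l
      ≤ ∑ l ∈ range n, (S / δ * s l + w l) := sum_le_sum fun l _ => by
        have := hs l; have := hw l
        calc w l * mlmcSampleSize s w n δ l ≤ w l * (S * s l / (δ * w l) + 1) := by
              gcongr
              exact (Nat.ceil_lt_add_one (by positivity)).le
          _ = S / δ * s l + w l := by field_simp
    _ = S ^ 2 / δ + ∑ l ∈ range n, w l := by rw [sum_add_distrib, ← mul_sum]; ring

end SampleAllocation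

noncomputable def dyadicMesh (T : ℝ) (l : ℕ) : ℝ := 2 ^ (-(l : ℝ)) * T

section DyadicMesh

variable {T : ℝ}

theorem dyadicMesh_eq_div (T : ℝ) (l : ℕ) : dyadicMesh T l = T / 2 ^ l := by
  rw [dyadicMesh, Real.rpow_neg zero_le_two, Real.rpow_natCast, inv_mul_eq_div]

theorem dyadicMesh_pos (hT : 0 < T) (l : ℕ) : 0 < dyadicMesh T l := by
  rw [dyadicMesh_eq_div]; positivity

theorem two_rpow_neg_pow (t : ℝ) (l : ℕ) : ((2 : ℝ) ^ (-t)) ^ l = (((2 : ℝ) ^ l) ^ t)⁻¹ := by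
  rw [Real.rpow_pow_comm zero_le_two, Real.rpow_neg (by positivity)]

theorem dyadicMesh_rpow (hT : 0 ≤ T) (t : ℝ) (l : ℕ) :
    dyadicMesh T l ^ t = T ^ t * ((2 : ℝ) ^ (-t)) ^ l := by
  rw [dyadicMesh_eq_div, Real.div_rpow hT (by positivity), two_rpow_neg_pow, div_eq_mul_inv]

theorem sum_inv_dyadicMesh_le (hT : 0 < T) (L : ℕ) :
    ∑ l ∈ range (L + 1), (dyadicMesh T l)⁻¹ ≤ 2 * 2 ^ L / T := by
  have hgeom : ∑ l ∈ range (L + 1), (2 : ℝ) ^ l = 2 * 2 ^ L - 1 := by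
    rw [geom_sum_eq (by norm_num), pow_succ]; ring
  simp_rw [dyadicMesh_eq_div, inv_div, ← sum_div, hgeom]
  gcongr
  linarith

theorem rpow_sub_one_div_two_sq_mul_self {x : ℝ} (hx : 0 < x) (β : ℝ) :
    (x ^ ((β - 1) / 2)) ^ 2 * x = x ^ β := by
  rw [← Real.rpow_natCast, ← Real.rpow_mul hx.le, ← Real.rpow_add_one hx.ne']
  congr 1; push_cast; ring

end DyadicMesh

theorem exists_le_two_pow_le_two_mul_max (x : ℝ) :
    ∃ L : ℕ, x ≤ 2 ^ L ∧ (2 : ℝ) ^ L ≤ 2 * max 1 x := by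
  rcases le_or_gt x 1 with hx | hx
  · exact ⟨0, by simpa using hx, by simp; linarith [le_max_left 1 x]⟩
  · obtain ⟨n, hn, hxn⟩ := exists_nat_pow_near hx.le one_lt_two
    exact ⟨n + 1, hxn.le, by rw [pow_succ, max_eq_right hx.le]; linarith⟩

theorem exists_level_with_bias_le {c α : ℝ} (hc : 0 < c) (hα : 0 < α) :
    ∃ K, 1 ≤ K ∧ ∀ ε, 0 < ε → ε ≤ 1 → ∃ L : ℕ,
      c * ((2 : ℝ) ^ (-α)) ^ L ≤ ε ∧ (2 : ℝ) ^ L ≤ K * ε ^ (-(1 / α)) := by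
  refine ⟨2 * max 1 (c ^ (1 / α)), by linarith [le_max_left 1 (c ^ (1 / α))], fun ε hε hε1 => ?_⟩
  obtain ⟨L, hxL, hLx⟩ := exists_le_two_pow_le_two_mul_max ((c / ε) ^ (1 / α))
  refine ⟨L, ?_, hLx.trans ?_⟩
  · have hpow : c / ε ≤ ((2 : ℝ) ^ L) ^ α := by
      calc c / ε = ((c / ε) ^ (1 / α)) ^ α := by
            rw [← Real.rpow_mul (by positivity), one_div_mul_cancel hα.ne', Real.rpow_one]
        _ ≤ ((2 : ℝ) ^ L) ^ α := Real.rpow_le_rpow (by positivity) hxL hα.le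
    rw [two_rpow_neg_pow, ← div_eq_mul_inv, div_le_iff₀ (by positivity)]
    rwa [div_le_iff₀' hε] at hpow
  · have he : 1 ≤ ε ^ (-(1 / α)) :=
      Real.one_le_rpow_of_pos_of_le_one_of_nonpos hε hε1 (by simp [hα.le])
    have hx : (c / ε) ^ (1 / α) = c ^ (1 / α) * ε ^ (-(1 / α)) := by
      rw [Real.div_rpow hc.le hε.le, Real.rpow_neg hε.le, div_eq_mul_inv]
    rw [hx, mul_assoc]
    gcongr
    exact max_le (by nlinarith [le_max_left 1 (c ^ (1 / α))])
      (mul_le_mul_of_nonneg_right (le_max_right _ _) (by linarith))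

theorem nat_add_one_le_mul_neg_log {K a ε : ℝ} {L : ℕ} (hK : 1 ≤ K) (hε : 0 < ε)
    (hεe : ε < Real.exp (-1)) (hL : (2 : ℝ) ^ L ≤ K * ε ^ (-a)) :
    (L : ℝ) + 1 ≤ ((Real.log K + a) / Real.log 2 + 1) * (-Real.log ε) := by
  have hlogε : 1 < -Real.log ε := by
    linarith [(Real.log_lt_iff_lt_exp hε).2 hεe]
  have hlog2 : 0 < Real.log 2 := Real.log_pos one_lt_two
  have hlogK : 0 ≤ Real.log K := Real.log_nonneg hK
  have htake := Real.log_le_log (by positivity) hL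
  rw [Real.log_pow, Real.log_mul (by positivity) (by positivity), Real.log_rpow hε] at htake
  have hL : (L : ℝ) * Real.log 2 ≤ (Real.log K + a) * (-Real.log ε) := by nlinarith
  rw [add_one_mul, div_mul_eq_mul_div]
  gcongr
  rwa [le_div_iff₀ hlog2]

noncomputable def mlmcCostFactor (α β ε : ℝ) : ℝ :=
  if 1 < β then 1 else if β = 1 then Real.log ε ^ 2 else ε ^ (-(1 - β) / α)

theorem one_le_mlmcCostFactor {α β ε : ℝ} (hα : 0 < α) (hε : 0 < ε)
    (hεe : ε < Real.exp (-1)) : 1 ≤ mlmcCostFactor α β ε := by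
  unfold mlmcCostFactor
  split_ifs with h1 h2
  · rfl
  · nlinarith [(Real.log_lt_iff_lt_exp hε).2 hεe]
  · exact Real.one_le_rpow_of_pos_of_le_one_of_nonpos hε
      (hεe.trans (Real.exp_lt_one_iff.2 (by norm_num))).le
      (div_nonpos_of_nonpos_of_nonneg (by linarith) hα.le)

theorem ite_eq_mul_mlmcCostFactor {α β ε : ℝ} (hε : 0 < ε) (c : ℝ) :
    (if 1 < β then c * ε ^ (-2 : ℝ)
      else if β = 1 then c * ε ^ (-2 : ℝ) * Real.log ε ^ 2
      else c * ε ^ (-2 - (1 - β) / α)) = c * (ε ^ (-2 : ℝ) * mlmcCostFactor α β ε) := by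
  unfold mlmcCostFactor
  split_ifs
  · ring
  · ring
  · rw [← Real.rpow_add hε, neg_div, sub_eq_add_neg]

theorem geom_sum_range_succ_le_of_one_lt {q : ℝ} (hq : 1 < q) (n : ℕ) :
    ∑ i ∈ range (n + 1), q ^ i ≤ q / (q - 1) * q ^ n := by
  rw [geom_sum_eq hq.ne', div_mul_eq_mul_div, ← pow_succ']
  gcongr
  linarith

theorem sum_range_dyadicMesh_rpow {T : ℝ} (hT : 0 ≤ T) (t : ℝ) (n : ℕ) :
    ∑ l ∈ range n, dyadicMesh T l ^ t = T ^ t * ∑ l ∈ range n, ((2 : ℝ) ^ (-t)) ^ l := by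
  rw [mul_sum]; exact sum_congr rfl fun l _ => dyadicMesh_rpow hT t l

theorem exists_sq_sum_dyadicMesh_rpow_le_of_lt_one {T β : ℝ} (hT : 0 < T) (hβ : β < 1) :
    ∃ C, 0 ≤ C ∧ ∀ L : ℕ,
      (∑ l ∈ range (L + 1), dyadicMesh T l ^ ((β - 1) / 2)) ^ 2 ≤ C * ((2 : ℝ) ^ L) ^ (1 - β) := by
  set q := (2 : ℝ) ^ (-((β - 1) / 2))
  have hq1 : 1 < q := Real.one_lt_rpow one_lt_two (by linarith)
  refine ⟨(T ^ ((β - 1) / 2) * (q / (q - 1))) ^ 2, sq_nonneg _, fun L => ?_⟩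
  have hqL : (q ^ L) ^ 2 = ((2 : ℝ) ^ L) ^ (1 - β) := by
    rw [← pow_mul, mul_comm, pow_mul, ← Real.rpow_natCast q 2, ← Real.rpow_mul zero_le_two,
      Real.rpow_pow_comm zero_le_two]
    congr 1; push_cast; ring
  rw [sum_range_dyadicMesh_rpow hT.le, ← hqL]
  calc (T ^ ((β - 1) / 2) * ∑ l ∈ range (L + 1), q ^ l) ^ 2
      ≤ (T ^ ((β - 1) / 2) * (q / (q - 1) * q ^ L)) ^ 2 := by
        gcongr
        exact geom_sum_range_succ_le_of_one_lt hq1 L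
    _ = (T ^ ((β - 1) / 2) * (q / (q - 1))) ^ 2 * (q ^ L) ^ 2 := by ring

theorem exists_sq_sum_dyadicMesh_rpow_le {T K₀ : ℝ} (α β : ℝ) (hT : 0 < T) (hK₀ : 1 ≤ K₀) :
    ∃ K, 0 ≤ K ∧ ∀ ε, 0 < ε → ε < Real.exp (-1) → ∀ L : ℕ, (2 : ℝ) ^ L ≤ K₀ * ε ^ (-(1 / α)) →
      (∑ l ∈ range (L + 1), dyadicMesh T l ^ ((β - 1) / 2)) ^ 2 ≤ K * mlmcCostFactor α β ε := by
  rcases lt_trichotomy 1 β with hβ | rfl | hβ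
  · set q := (2 : ℝ) ^ (-((β - 1) / 2))
    have hq : 0 < q := by positivity
    have hq1 : q < 1 := Real.rpow_lt_one_of_one_lt_of_neg one_lt_two (by linarith)
    refine ⟨(T ^ ((β - 1) / 2) * (1 - q)⁻¹) ^ 2, sq_nonneg _, fun ε _ _ L _ => ?_⟩
    rw [mlmcCostFactor, if_pos hβ, mul_one, sum_range_dyadicMesh_rpow hT.le]
    gcongr
    have := geom_sum_Ico_le_of_lt_one (m := 0) (n := L + 1) hq.le hq1
    rwa [← range_eq_Ico, pow_zero, one_div] at this
  · refine ⟨((Real.log K₀ + 1 / α) / Real.log 2 + 1) ^ 2, sq_nonneg _,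
      fun ε hε hεe L hL => ?_⟩
    have hS : ∑ l ∈ range (L + 1), dyadicMesh T l ^ (((1 : ℝ) - 1) / 2) = (L : ℝ) + 1 := by
      simp
    rw [mlmcCostFactor, if_neg (lt_irrefl 1), if_pos rfl, hS, ← neg_sq (Real.log ε), ← mul_pow]
    exact pow_le_pow_left₀ (by positivity) (nat_add_one_le_mul_neg_log hK₀ hε hεe hL) 2
  · obtain ⟨C, hC, hSC⟩ := exists_sq_sum_dyadicMesh_rpow_le_of_lt_one hT hβ
    refine ⟨C * K₀ ^ (1 - β), by positivity, fun ε hε _ L hL => ?_⟩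
    rw [mlmcCostFactor, if_neg (by linarith), if_neg hβ.ne]
    calc _ ≤ C * ((2 : ℝ) ^ L) ^ (1 - β) := hSC L
      _ ≤ C * (K₀ * ε ^ (-(1 / α))) ^ (1 - β) := by gcongr
      _ = C * K₀ ^ (1 - β) * ε ^ (-(1 - β) / α) := by
        rw [Real.mul_rpow (by positivity) (by positivity), ← Real.rpow_mul hε.le, mul_assoc]
        congr 3; ring

/-- `mlmcSampleSize` for per-sample variance `h_l ^ β` and per-sample cost `h_l⁻¹`. -/
noncomputable def dyadicSampleSize (T β : ℝ) (L : ℕ) (δ : ℝ) : ℕ → ℕ :=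
  mlmcSampleSize (fun l => dyadicMesh T l ^ ((β - 1) / 2)) (fun l => (dyadicMesh T l)⁻¹) (L + 1) δ

section DyadicSampleSize

variable {T δ : ℝ} (β : ℝ)

theorem one_le_dyadicSampleSize (hT : 0 < T) (hδ : 0 < δ) (L l : ℕ) :
    1 ≤ dyadicSampleSize T β L δ l :=
  one_le_mlmcSampleSize (fun l => Real.rpow_pos_of_pos (dyadicMesh_pos hT l) _)
    (fun l => inv_pos.2 (dyadicMesh_pos hT l)) L.succ_pos hδ l

theorem sum_rpow_div_dyadicSampleSize_le (hT : 0 < T) (hδ : 0 < δ) (L : ℕ) :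
    ∑ l ∈ range (L + 1), dyadicMesh T l ^ β / dyadicSampleSize T β L δ l ≤ δ := by
  refine le_of_eq_of_le (sum_congr rfl fun l _ => ?_)
    (sum_sq_div_mul_mlmcSampleSize_le (s := fun l => dyadicMesh T l ^ ((β - 1) / 2))
      (fun l => Real.rpow_pos_of_pos (dyadicMesh_pos hT l) _)
      (fun l => inv_pos.2 (dyadicMesh_pos hT l)) hδ)
  rw [← rpow_sub_one_div_two_sq_mul_self (dyadicMesh_pos hT l) β, div_mul_eq_div_div_swap,
    div_inv_eq_mul, div_mul_eq_mul_div]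
  rfl

theorem sum_dyadicSampleSize_div_le (hT : 0 < T) (hδ : 0 < δ) (L : ℕ) :
    ∑ l ∈ range (L + 1), (dyadicSampleSize T β L δ l : ℝ) / dyadicMesh T l ≤
      (∑ l ∈ range (L + 1), dyadicMesh T l ^ ((β - 1) / 2)) ^ 2 / δ + 2 * 2 ^ L / T := by
  calc ∑ l ∈ range (L + 1), (dyadicSampleSize T β L δ l : ℝ) / dyadicMesh T l
      = ∑ l ∈ range (L + 1), (dyadicMesh T l)⁻¹ * dyadicSampleSize T β L δ l :=
        sum_congr rfl fun l _ => by rw [div_eq_inv_mul]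
    _ ≤ (∑ l ∈ range (L + 1), dyadicMesh T l ^ ((β - 1) / 2)) ^ 2 / δ +
        ∑ l ∈ range (L + 1), (dyadicMesh T l)⁻¹ :=
      sum_mul_mlmcSampleSize_le (fun l => (Real.rpow_pos_of_pos (dyadicMesh_pos hT l) _).le)
        (fun l => inv_pos.2 (dyadicMesh_pos hT l)) hδ
    _ ≤ _ := by gcongr; exact sum_inv_dyadicMesh_le hT L

end DyadicSampleSize

theorem exists_mlmc_parameters {T α β c₁ c₂ c₃ : ℝ} (hT : 0 < T) (hα : 1 / 2 ≤ α)
    (hc₁ : 0 < c₁) (hc₂ : 0 < c₂) (hc₃ : 0 < c₃) :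
    ∃ c₄, 0 < c₄ ∧ ∀ ε, 0 < ε → ε < Real.exp (-1) → ∃ (L : ℕ) (N : ℕ → ℕ), (∀ l, 1 ≤ N l) ∧
      c₁ * dyadicMesh T L ^ α ≤ ε / 2 ∧
      ∑ l ∈ range (L + 1), c₂ * dyadicMesh T l ^ β / N l ≤ ε ^ 2 / 4 ∧
      ∑ l ∈ range (L + 1), c₃ * N l / dyadicMesh T l ≤
        c₄ * (ε ^ (-2 : ℝ) * mlmcCostFactor α β ε) := by
  have hα0 : 0 < α := by linarith
  obtain ⟨K₀, hK₀, hlevel⟩ := exists_level_with_bias_le (by positivity : 0 < 2 * c₁ * T ^ α) hα0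
  obtain ⟨K, hK, hS⟩ := exists_sq_sum_dyadicMesh_rpow_le α β hT hK₀
  refine ⟨c₃ * (4 * c₂ * K + 2 * K₀ / T), by positivity, fun ε hε hεe => ?_⟩
  have hε1 : ε < 1 := hεe.trans (Real.exp_lt_one_iff.2 (by norm_num))
  have hg := one_le_mlmcCostFactor (β := β) hα0 hε hεe
  obtain ⟨L, hbias, h2L⟩ := hlevel ε hε hε1.le
  have hε2 : ε ^ (-2 : ℝ) = (ε ^ 2)⁻¹ := by rw [Real.rpow_neg hε.le, Real.rpow_two]
  have h2L' : (2 : ℝ) ^ L ≤ K₀ * (ε ^ 2)⁻¹ * mlmcCostFactor α β ε := by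
    have hpow : ε ^ (-(1 / α)) ≤ ε ^ (-2 : ℝ) := Real.rpow_le_rpow_of_exponent_ge hε hε1.le
      (by rw [neg_le_neg_iff, div_le_iff₀ hα0]; linarith)
    rw [← hε2]
    exact h2L.trans ((mul_le_mul_of_nonneg_left hpow (by linarith)).trans
      (le_mul_of_one_le_right (by positivity) hg))
  set δ := ε ^ 2 / (4 * c₂) with hδdef
  have hδ : 0 < δ := by positivity
  refine ⟨L, dyadicSampleSize T β L δ, one_le_dyadicSampleSize β hT hδ L,
    by rw [dyadicMesh_rpow hT.le]; linarith, ?_, ?_⟩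
  · calc ∑ l ∈ range (L + 1), c₂ * dyadicMesh T l ^ β / dyadicSampleSize T β L δ l
        = c₂ * ∑ l ∈ range (L + 1), dyadicMesh T l ^ β / dyadicSampleSize T β L δ l := by
          simp_rw [mul_div_assoc, mul_sum]
      _ ≤ c₂ * δ := by gcongr; exact sum_rpow_div_dyadicSampleSize_le β hT hδ L
      _ = ε ^ 2 / 4 := by rw [hδdef]; field_simp
  · calc ∑ l ∈ range (L + 1), c₃ * dyadicSampleSize T β L δ l / dyadicMesh T l
        = c₃ * ∑ l ∈ range (L + 1), (dyadicSampleSize T β L δ l : ℝ) / dyadicMesh T l := by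
          simp_rw [mul_div_assoc, mul_sum]
      _ ≤ c₃ * ((∑ l ∈ range (L + 1), dyadicMesh T l ^ ((β - 1) / 2)) ^ 2 / δ
            + 2 * 2 ^ L / T) := by gcongr; exact sum_dyadicSampleSize_div_le β hT hδ L
      _ ≤ c₃ * (K * mlmcCostFactor α β ε * (4 * c₂) / ε ^ 2
            + 2 * (K₀ * (ε ^ 2)⁻¹ * mlmcCostFactor α β ε) / T) := by
          rw [hδdef, div_div_eq_mul_div]
          gcongr
          exact hS ε hε hεe L h2L
      _ = c₃ * (4 * c₂ * K + 2 * K₀ / T) * (ε ^ (-2 : ℝ) * mlmcCostFactor α β ε) := by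
          rw [hε2]; ring

theorem mlmc_complexity_general
    {Ω : Type*} [MeasurableSpace Ω] (μ : Measure Ω) [IsProbabilityMeasure μ]
    (T : ℝ) (hT : 0 < T)
    (P : Ω → ℝ) (Phat : ℕ → Ω → ℝ)
    (Y : ℕ → ℕ → Ω → ℝ) (Cost : ℕ → ℕ → ℝ)
    (h : ℕ → ℝ) (hdef : ∀ l, h l = 2 ^ (-(l : ℝ)) * T)
    (α β c₁ c₂ c₃ : ℝ)
    (hα : (1 : ℝ) / 2 ≤ α)
    (hc₁ : 0 < c₁) (hc₂ : 0 < c₂) (hc₃ : 0 < c₃)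
    (hPhatint : ∀ l, Integrable (Phat l) μ)
    (hYL2 : ∀ l N, MemLp (Y l N) 2 μ)
    -- independence of the level estimators, for any choice of sample sizes
    (hindep : ∀ N : ℕ → ℕ, iIndepFun (fun l => Y l (N l)) μ)
    -- (i) unbiasedness
    (hbias0 : ∀ N, 1 ≤ N → ∫ ω, Y 0 N ω ∂μ = ∫ ω, Phat 0 ω ∂μ)
    (hbias : ∀ l N, 1 ≤ l → 1 ≤ N →
      ∫ ω, Y l N ω ∂μ = ∫ ω, (Phat l ω - Phat (l - 1) ω) ∂μ)
    -- (ii) weak convergence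
    (hweak : ∀ l, |∫ ω, Phat l ω ∂μ - ∫ ω, P ω ∂μ| ≤ c₁ * h l ^ α)
    -- (iii) variance bound
    (hvar : ∀ l N, 1 ≤ N → variance (Y l N) μ ≤ c₂ * h l ^ β / N)
    -- (iv) cost bound
    (hcost : ∀ l N, Cost l N ≤ c₃ * N / h l) :
    ∃ c₄ : ℝ, 0 < c₄ ∧ ∀ ε : ℝ, 0 < ε → ε < Real.exp (-1) →
      ∃ (L : ℕ) (N : ℕ → ℕ), (∀ l ≤ L, 1 ≤ N l) ∧
        (∫ ω, (∑ l ∈ Finset.range (L + 1), Y l (N l) ω - ∫ ω', P ω' ∂μ) ^ 2 ∂μ < ε ^ 2) ∧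
        (∑ l ∈ Finset.range (L + 1), Cost l (N l)) ≤
          (if 1 < β then c₄ * ε ^ (-2 : ℝ)
           else if β = 1 then c₄ * ε ^ (-2 : ℝ) * Real.log ε ^ 2
           else c₄ * ε ^ (-2 - (1 - β) / α)) := by
  obtain rfl : h = dyadicMesh T := funext hdef
  obtain ⟨c₄, hc₄, hparams⟩ := exists_mlmc_parameters (β := β) hT hα hc₁ hc₂ hc₃
  refine ⟨c₄, hc₄, fun ε hε hεe => ?_⟩
  obtain ⟨L, N, hN, hbiasL, hvarL, hcostL⟩ := hparams ε hε hεe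
  refine ⟨L, N, fun l _ => hN l, ?_, ?_⟩
  · have hmean : ∑ l ∈ range (L + 1), ∫ ω, Y l (N l) ω ∂μ = ∫ ω, Phat L ω ∂μ :=
      sum_range_succ_eq_of_telescoping (a := fun l => ∫ ω, Y l (N l) ω ∂μ)
        (b := fun l => ∫ ω, Phat l ω ∂μ) (hbias0 _ (hN 0))
        (fun l hl => by simp only [hbias l _ hl (hN l), integral_sub (hPhatint l) (hPhatint _)]) L
    have hvarsum : ∑ l ∈ range (L + 1), variance (Y l (N l)) μ ≤ ε ^ 2 / 4 :=
      (sum_le_sum fun l _ => hvar l _ (hN l)).trans hvarL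
    have hbias_sq : (∫ ω, Phat L ω ∂μ - ∫ ω, P ω ∂μ) ^ 2 ≤ (ε / 2) ^ 2 := by
      rw [← sq_abs]
      exact pow_le_pow_left₀ (abs_nonneg _) ((hweak L).trans hbiasL) 2
    rw [integral_sum_sub_sq_eq_of_iIndepFun (fun l => hYL2 l (N l)) (hindep N), hmean]
    nlinarith [pow_pos hε 2]
  · rw [ite_eq_mul_mlmcCostFactor hε]
    exact (sum_le_sum fun l _ => hcost l (N l)).trans hcostL

/-- Multilevel Monte Carlo complexity theorem (Giles).  `Y l N` is the level-`l`
estimator based on `N` samples, `Cost l N` its computational cost, `Phat l` the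
level-`l` payoff approximation and `P` the true payoff.  Under the unbiasedness,
weak-error, variance and cost hypotheses, for every accuracy `ε < e⁻¹` one can
choose the number of levels `L` and the sample sizes `N_l` so that the combined
estimator has mean-square error below `ε²` at the stated cost. -/
theorem mlmc_complexity
    {Ω : Type*} [MeasurableSpace Ω] (μ : Measure Ω) [IsProbabilityMeasure μ]
    (T : ℝ) (hT : 0 < T)
    (P : Ω → ℝ) (Phat : ℕ → Ω → ℝ)
    (Y : ℕ → ℕ → Ω → ℝ) (Cost : ℕ → ℕ → ℝ)
    (h : ℕ → ℝ) (hdef : ∀ l, h l = 2 ^ (-(l : ℝ)) * T)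
    (α β c₁ c₂ c₃ : ℝ)
    (hα : (1 : ℝ) / 2 ≤ α) (hβ : 0 < β)
    (hc₁ : 0 < c₁) (hc₂ : 0 < c₂) (hc₃ : 0 < c₃)
    (hPint : Integrable P μ)
    (hPhatint : ∀ l, Integrable (Phat l) μ)
    (hYmeas : ∀ l N, Measurable (Y l N))
    (hYL2 : ∀ l N, MemLp (Y l N) 2 μ)
    -- independence of the level estimators, for any choice of sample sizes
    (hindep : ∀ N : ℕ → ℕ, iIndepFun (fun l => Y l (N l)) μ)
    -- (i) unbiasedness
    (hbias0 : ∀ N, 1 ≤ N → ∫ ω, Y 0 N ω ∂μ = ∫ ω, Phat 0 ω ∂μ)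
    (hbias : ∀ l N, 1 ≤ l → 1 ≤ N →
      ∫ ω, Y l N ω ∂μ = ∫ ω, (Phat l ω - Phat (l - 1) ω) ∂μ)
    -- (ii) weak convergence
    (hweak : ∀ l, |∫ ω, Phat l ω ∂μ - ∫ ω, P ω ∂μ| ≤ c₁ * h l ^ α)
    -- (iii) variance bound
    (hvar : ∀ l N, 1 ≤ N → variance (Y l N) μ ≤ c₂ * h l ^ β / N)
    -- (iv) cost bound
    (hcost : ∀ l N, Cost l N ≤ c₃ * N / h l) :
    ∃ c₄ : ℝ, 0 < c₄ ∧ ∀ ε : ℝ, 0 < ε → ε < Real.exp (-1) →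
      ∃ (L : ℕ) (N : ℕ → ℕ), (∀ l ≤ L, 1 ≤ N l) ∧
        (∫ ω, (∑ l ∈ Finset.range (L + 1), Y l (N l) ω - ∫ ω', P ω' ∂μ) ^ 2 ∂μ < ε ^ 2) ∧
        (∑ l ∈ Finset.range (L + 1), Cost l (N l)) ≤
          (if 1 < β then c₄ * ε ^ (-2 : ℝ)
           else if β = 1 then c₄ * ε ^ (-2 : ℝ) * Real.log ε ^ 2
           else c₄ * ε ^ (-2 - (1 - β) / α)) :=
  mlmc_complexity_general μ T hT P Phat Y Cost h hdef α β c₁ c₂ c₃ hα hc₁ hc₂ hc₃ hPhatint hYL2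
    hindep hbias0 hbias hweak hvar hcost
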